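/- Fix n ≥ 1, ω₀ ∈ ℝ, γ ≥ 0, a unitary B ∈ M_n(ℂ), and a Hermitian H_B ∈ M_n(ℂ). Let H = ω₀·(σ_z ⊗ I_n) + I₂ ⊗ H_B and E = σ_z ⊗ B acting on ℂ² ⊗ ℂⁿ. Suppose ρ(t) satisfies the Lindblad equation dρ/dt = -i[H, ρ] + γ(2EρE† - E†Eρ - ρE†E). Then v(t) := tr(ρ(t)·(σ_- ⊗ I_n)) satisfies dv/dt = (-2iω₀ - 4γ)·v, hence |v(t)| = |v(0)|·exp(-4γt) is monotonically nonincreasing. -/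

import Mathlib

/-!
The observable `M = σ₋ ⊗ 1` is an eigenvector of the dual (Heisenberg-picture) Lindbladian
`L*(M) = i[H, M] + γ (2 E† M E - E†E M - M E†E)`: since `σ₋` anticommutes with `σ_z`, the
Hamiltonian gives `[H, M] = -2ω₀ M` (the bath part `1 ⊗ H_B` commutes with `M`), conjugation by
`E = σ_z ⊗ B` flips the sign of `M`, and `E†E = 1`. Hence `L*(M) = (-2iω₀ - 4γ) M`, and by
cyclicity of the trace `v(t) = tr(ρ(t) M)` solves the scalar linear equation
`v' = (-2iω₀ - 4γ) v`, so `v(t) = v(0) exp((-2iω₀ - 4γ) t)`.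
-/

open Matrix Complex
open scoped Kronecker

section Lindblad

variable {m : Type*} [Fintype m]

def lindbladian (H E : Matrix m m ℂ) (γ : ℂ) (ρ : Matrix m m ℂ) : Matrix m m ℂ :=
  -I • (H * ρ - ρ * H) + γ • ((2 : ℂ) • (E * ρ * Eᴴ) - Eᴴ * E * ρ - ρ * (Eᴴ * E))

def dualLindbladian (H E : Matrix m m ℂ) (γ : ℂ) (M : Matrix m m ℂ) : Matrix m m ℂ :=
  I • (H * M - M * H) + γ • ((2 : ℂ) • (Eᴴ * M * E) - Eᴴ * E * M - M * (Eᴴ * E))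

theorem trace_lindbladian_mul (H E : Matrix m m ℂ) (γ : ℂ) (ρ M : Matrix m m ℂ) :
    trace (lindbladian H E γ ρ * M) = trace (ρ * dualLindbladian H E γ M) := by
  have cycle (A B : Matrix m m ℂ) : trace (A * ρ * B) = trace (ρ * (B * A)) := by
    rw [trace_mul_cycle, trace_mul_comm]
  simp only [lindbladian, dualLindbladian, Matrix.add_mul, Matrix.sub_mul, Matrix.smul_mul,
    Matrix.mul_add, Matrix.mul_sub, Matrix.mul_smul, trace_add, trace_sub,
    trace_smul, cycle]
  rw [Matrix.mul_assoc (E * ρ), cycle, Matrix.mul_assoc ρ H, Matrix.mul_assoc ρ (Eᴴ * E)]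
  simp only [smul_eq_mul]
  ring

theorem dualLindbladian_eq_smul [DecidableEq m] {H E M : Matrix m m ℂ} (γ κ : ℂ)
    (hE : Eᴴ * E = 1) (hEM : Eᴴ * M * E = -M) (hHM : H * M - M * H = κ • M) :
    dualLindbladian H E γ M = (I * κ - 4 * γ) • M := by
  rw [dualLindbladian, hE, hEM, hHM, Matrix.one_mul, Matrix.mul_one]
  module

theorem hasDerivAt_trace_mul {ρ : ℝ → Matrix m m ℂ} {ρ' : Matrix m m ℂ} {t : ℝ}
    (hρ : ∀ i j, HasDerivAt (fun s => ρ s i j) (ρ' i j) t) (M : Matrix m m ℂ) :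
    HasDerivAt (fun s => trace (ρ s * M)) (trace (ρ' * M)) t := by
  simp only [trace, diag, mul_apply]
  exact HasDerivAt.fun_sum fun k _ => HasDerivAt.fun_sum fun j _ => (hρ k j).mul_const (M j k)

theorem hasDerivAt_trace_mul_of_dualLindbladian_eq_smul {H E M : Matrix m m ℂ} {γ c : ℂ}
    {ρ : ℝ → Matrix m m ℂ} {t : ℝ}
    (hρ : ∀ i j, HasDerivAt (fun s => ρ s i j) (lindbladian H E γ (ρ t) i j) t)
    (hM : dualLindbladian H E γ M = c • M) :
    HasDerivAt (fun s => trace (ρ s * M)) (c * trace (ρ t * M)) t := by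
  simpa [trace_lindbladian_mul, hM] using hasDerivAt_trace_mul hρ M

end Lindblad

theorem eq_mul_cexp_of_hasDerivAt {v : ℝ → ℂ} {c : ℂ} (hv : ∀ t, HasDerivAt v (c * v t) t)
    (t : ℝ) : v t = v 0 * exp (c * t) := by
  have hconst : ∀ s : ℝ, HasDerivAt (fun s : ℝ => v s * exp (-c * s)) 0 s := fun s => by
    have he : HasDerivAt (fun s : ℝ => -c * (s : ℂ)) (-c) s := by
      simpa using (ofRealCLM.hasDerivAt (x := s)).const_mul (-c)
    exact ((hv s).mul he.cexp).congr_deriv (by ring)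
  have h := is_const_of_deriv_eq_zero (fun s => (hconst s).differentiableAt)
    (fun s => (hconst s).deriv) t 0
  simp only [ofReal_zero, mul_zero, exp_zero, mul_one] at h
  rw [← h, mul_assoc, ← exp_add]
  simp

theorem neg_kronecker {α l m n p : Type*} [Ring α] (A : Matrix l m α) (B : Matrix n p α) :
    (-A) ⊗ₖ B = -(A ⊗ₖ B) := by
  ext
  simp

def pauliZ : Matrix (Fin 2) (Fin 2) ℂ := !![1, 0; 0, -1]

def sigmaMinus : Matrix (Fin 2) (Fin 2) ℂ := !![0, 0; 1, 0]

theorem pauliZ_mul_pauliZ : pauliZ * pauliZ = 1 := by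
  simp [pauliZ, one_fin_two]

theorem conjTranspose_pauliZ : pauliZᴴ = pauliZ := by
  ext i j
  fin_cases i <;> fin_cases j <;> simp [pauliZ]

theorem sigmaMinus_mul_pauliZ : sigmaMinus * pauliZ = sigmaMinus := by
  ext i j
  fin_cases i <;> fin_cases j <;> simp [pauliZ, sigmaMinus]

theorem pauliZ_mul_sigmaMinus : pauliZ * sigmaMinus = -sigmaMinus := by
  simp [pauliZ, sigmaMinus]

section Dephasing

variable {n : Type*} [Fintype n] [DecidableEq n]

theorem conjTranspose_pauliZ_kronecker_mul_self {B : Matrix n n ℂ} (hB : Bᴴ * B = 1) :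
    (pauliZ ⊗ₖ B)ᴴ * (pauliZ ⊗ₖ B) = 1 := by
  rw [conjTranspose_kronecker, conjTranspose_pauliZ, ← mul_kronecker_mul, pauliZ_mul_pauliZ, hB,
    one_kronecker_one]

theorem conjTranspose_pauliZ_kronecker_mul_sigmaMinus_kronecker_one_mul {B : Matrix n n ℂ}
    (hB : Bᴴ * B = 1) :
    (pauliZ ⊗ₖ B)ᴴ * (sigmaMinus ⊗ₖ 1) * (pauliZ ⊗ₖ B) = -(sigmaMinus ⊗ₖ (1 : Matrix n n ℂ)) := by
  rw [conjTranspose_kronecker, conjTranspose_pauliZ, ← mul_kronecker_mul, ← mul_kronecker_mul,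
    pauliZ_mul_sigmaMinus, Matrix.neg_mul, sigmaMinus_mul_pauliZ, Matrix.mul_one, hB, neg_kronecker]

theorem commutator_sigmaMinus_kronecker_one (ω : ℂ) (HB : Matrix n n ℂ) :
    (ω • (pauliZ ⊗ₖ 1) + 1 ⊗ₖ HB) * (sigmaMinus ⊗ₖ 1)
        - (sigmaMinus ⊗ₖ 1) * (ω • (pauliZ ⊗ₖ 1) + 1 ⊗ₖ HB)
      = (-2 * ω) • (sigmaMinus ⊗ₖ (1 : Matrix n n ℂ)) := by
  rw [Matrix.add_mul, Matrix.mul_add, Matrix.smul_mul, Matrix.mul_smul, ← mul_kronecker_mul,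
    ← mul_kronecker_mul, ← mul_kronecker_mul, ← mul_kronecker_mul, pauliZ_mul_sigmaMinus,
    sigmaMinus_mul_pauliZ, neg_kronecker]
  simp only [Matrix.one_mul, Matrix.mul_one]
  module

end Dephasing

theorem lindblad_dephasing_visibility_monotone_general
    (n : ℕ) (ω₀ γ : ℝ)
    (B HB : Matrix (Fin n) (Fin n) ℂ)
    (hB : B ∈ Matrix.unitaryGroup (Fin n) ℂ)
    (σz σm : Matrix (Fin 2) (Fin 2) ℂ)
    (hσz : σz = !![1, 0; 0, -1]) (hσm : σm = !![0, 0; 1, 0])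
    (H E : Matrix (Fin 2 × Fin n) (Fin 2 × Fin n) ℂ)
    (hH : H = (ω₀ : ℂ) • (σz ⊗ₖ (1 : Matrix (Fin n) (Fin n) ℂ))
        + (1 : Matrix (Fin 2) (Fin 2) ℂ) ⊗ₖ HB)
    (hE : E = σz ⊗ₖ B)
    (ρ : ℝ → Matrix (Fin 2 × Fin n) (Fin 2 × Fin n) ℂ)
    (hρ : ∀ i j t, HasDerivAt (fun s => ρ s i j)
        ((-Complex.I • (H * ρ t - ρ t * H)
          + (γ : ℂ) • ((2 : ℂ) • (E * ρ t * Eᴴ) - Eᴴ * E * ρ t - ρ t * (Eᴴ * E))) i j) t)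
    (v : ℝ → ℂ)
    (hv : ∀ t, v t = Matrix.trace (ρ t * (σm ⊗ₖ (1 : Matrix (Fin n) (Fin n) ℂ)))) :
    (∀ t, HasDerivAt v ((-2 * Complex.I * ω₀ - 4 * γ) * v t) t) ∧
    (∀ t, 0 ≤ t → ‖v t‖ = ‖v 0‖ * Real.exp (-4 * γ * t)) := by
  obtain rfl : σz = pauliZ := hσz
  obtain rfl : σm = sigmaMinus := hσm
  set M := sigmaMinus ⊗ₖ (1 : Matrix (Fin n) (Fin n) ℂ)
  have hBB : Bᴴ * B = 1 := mem_unitaryGroup_iff'.mp hB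
  have hEE : Eᴴ * E = 1 := hE ▸ conjTranspose_pauliZ_kronecker_mul_self hBB
  have hEM : Eᴴ * M * E = -M :=
    hE ▸ conjTranspose_pauliZ_kronecker_mul_sigmaMinus_kronecker_one_mul hBB
  have hHM : H * M - M * H = (-2 * ω₀ : ℂ) • M := hH ▸ commutator_sigmaMinus_kronecker_one _ HB
  have hdual : dualLindbladian H E γ M = (-2 * I * ω₀ - 4 * γ) • M := by
    rw [dualLindbladian_eq_smul γ _ hEE hEM hHM]
    ring_nf
  have hderiv t : HasDerivAt v ((-2 * I * ω₀ - 4 * γ) * v t) t := by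
    rw [funext hv]
    exact hasDerivAt_trace_mul_of_dualLindbladian_eq_smul (hρ · · t) hdual
  refine ⟨hderiv, fun t _ => ?_⟩
  rw [eq_mul_cexp_of_hasDerivAt hderiv t, norm_mul, norm_exp]
  simp

theorem lindblad_dephasing_visibility_monotone
    (n : ℕ) (hn : 1 ≤ n) (ω₀ γ : ℝ) (hγ : 0 ≤ γ)
    (B HB : Matrix (Fin n) (Fin n) ℂ)
    (hB : B ∈ Matrix.unitaryGroup (Fin n) ℂ)
    (hHB : HB.IsHermitian)
    (σz σm : Matrix (Fin 2) (Fin 2) ℂ)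
    (hσz : σz = !![1, 0; 0, -1]) (hσm : σm = !![0, 0; 1, 0])
    (H E : Matrix (Fin 2 × Fin n) (Fin 2 × Fin n) ℂ)
    (hH : H = (ω₀ : ℂ) • (σz ⊗ₖ (1 : Matrix (Fin n) (Fin n) ℂ))
        + (1 : Matrix (Fin 2) (Fin 2) ℂ) ⊗ₖ HB)
    (hE : E = σz ⊗ₖ B)
    (ρ : ℝ → Matrix (Fin 2 × Fin n) (Fin 2 × Fin n) ℂ)
    (hρ : ∀ i j t, HasDerivAt (fun s => ρ s i j)
        ((-Complex.I • (H * ρ t - ρ t * H)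
          + (γ : ℂ) • ((2 : ℂ) • (E * ρ t * Eᴴ) - Eᴴ * E * ρ t - ρ t * (Eᴴ * E))) i j) t)
    (v : ℝ → ℂ)
    (hv : ∀ t, v t = Matrix.trace (ρ t * (σm ⊗ₖ (1 : Matrix (Fin n) (Fin n) ℂ)))) :
    (∀ t, HasDerivAt v ((-2 * Complex.I * ω₀ - 4 * γ) * v t) t) ∧
    (∀ t, 0 ≤ t → ‖v t‖ = ‖v 0‖ * Real.exp (-4 * γ * t)) :=
  lindblad_dephasing_visibility_monotone_general n ω₀ γ B HB hB σz σm hσz hσm H E hH hE ρ hρ v hv
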